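/- Let A be an N×K matrix with AᵀA = (N/K)·I_K and M a K×K symmetric positive definite matrix. Then there exists an invertible K×K matrix H such that the columns of AH are orthonormal eigenvectors of A M Aᵀ corresponding to its nonzero eigenvalues. -/

import Mathlib

open Matrix
/-- There exists an invertible H such that the columns of A·H are orthonormal
eigenvectors of A M Aᵀ corresponding to nonzero eigenvalues. -/
theorem stmt_2 {N K : ℕ} (hK : 0 < K) (hKN : K ≤ N)
    (A : Matrix (Fin N) (Fin K) ℝ) (M : Matrix (Fin K) (Fin K) ℝ)
    (hA : Aᵀ * A = ((N : ℝ) / (K : ℝ)) • (1 : Matrix (Fin K) (Fin K) ℝ))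
    (hM : M.PosDef) :
    ∃ H : Matrix (Fin K) (Fin K) ℝ, IsUnit H ∧
      (A * H)ᵀ * (A * H) = (1 : Matrix (Fin K) (Fin K) ℝ) ∧
      ∀ j : Fin K, ∃ c : ℝ, c ≠ 0 ∧
        (A * M * Aᵀ).mulVec (fun i => (A * H) i j) = c • (fun i => (A * H) i j) := by
  have hN : 0 < N := lt_of_lt_of_le hK hKN
  set s : ℝ := (N : ℝ) / (K : ℝ) with hs
  have hNpos : (0:ℝ) < N := by exact_mod_cast hN
  have hKpos : (0:ℝ) < K := by exact_mod_cast hK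
  have hspos : 0 < s := div_pos hNpos hKpos
  set t : ℝ := Real.sqrt (1 / s) with ht
  have htpos : 0 < t := Real.sqrt_pos.2 (by positivity)
  have hts : t * t = 1 / s := Real.mul_self_sqrt (by positivity)
  set b := hM.1.eigenvectorBasis with hb
  set U : Matrix (Fin K) (Fin K) ℝ := fun i j => b j i with hU
  -- orthonormality of columns of U
  have hUU : Uᵀ * U = (1 : Matrix (Fin K) (Fin K) ℝ) := by
    ext j j'
    have := (orthonormal_iff_ite.mp b.orthonormal) j j'
    change ∑ x, U x j * U x j' = (1 : Matrix (Fin K) (Fin K) ℝ) j j'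
    simpa [Matrix.mul_apply, Matrix.one_apply, hU, PiLp.inner_apply, RCLike.inner_apply,
      mul_comm] using this
  obtain ⟨H, hH⟩ : ∃ H : Matrix (Fin K) (Fin K) ℝ, H = t • U := ⟨_, rfl⟩
  have hHH : Hᵀ * H = (1/s) • (1 : Matrix (Fin K) (Fin K) ℝ) := by
    rw [hH, Matrix.transpose_smul, Matrix.smul_mul, Matrix.mul_smul, hUU, smul_smul, hts]
  have hdet : IsUnit H := by
    rw [Matrix.isUnit_iff_isUnit_det]
    have hdet2 : H.det * H.det = ((1/s) • (1 : Matrix (Fin K) (Fin K) ℝ)).det := by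
      rw [← hHH, Matrix.det_mul, Matrix.det_transpose]
    have : H.det ≠ 0 := by
      intro h
      rw [h, mul_zero] at hdet2
      have := hdet2.symm
      rw [Matrix.det_smul, Matrix.det_one, mul_one] at this
      have : (1/s) ^ (Fintype.card (Fin K)) ≠ 0 := pow_ne_zero _ (by positivity)
      simp_all
    exact isUnit_iff_ne_zero.2 this
  refine ⟨H, hdet, ?_, ?_⟩
  · calc (A * H)ᵀ * (A * H) = Hᵀ * (Aᵀ * A) * H := by
          simp only [Matrix.transpose_mul, Matrix.mul_assoc]
    _ = Hᵀ * (s • (1 : Matrix (Fin K) (Fin K) ℝ)) * H := by rw [hA]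
    _ = s • (Hᵀ * H) := by rw [Matrix.mul_smul, Matrix.mul_one, Matrix.smul_mul]
    _ = (1 : Matrix (Fin K) (Fin K) ℝ) := by
          rw [hHH, smul_smul, mul_one_div, div_self (ne_of_gt hspos), one_smul]
  · intro j
    refine ⟨s * hM.1.eigenvalues j, ?_, ?_⟩
    · exact mul_ne_zero (ne_of_gt hspos) (ne_of_gt (hM.eigenvalues_pos j))
    · set v : Fin K → ℝ := fun k => H k j with hv
      have hcol : (fun i => (A * H) i j) = A *ᵥ v := by
        funext i; simp [Matrix.mul_apply, Matrix.mulVec, dotProduct, hv]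
      have hvb : v = t • ⇑(b j) := by funext k; simp [hv, hH, hU, Matrix.smul_apply]; rfl
      have hMv : M *ᵥ v = hM.1.eigenvalues j • v := by
        rw [hvb, Matrix.mulVec_smul, hM.1.mulVec_eigenvectorBasis, smul_comm]
      rw [hcol, Matrix.mulVec_mulVec, Matrix.mul_assoc, Matrix.mul_assoc, hA,
        Matrix.mul_smul, Matrix.mul_one, Matrix.mul_smul, Matrix.smul_mulVec,
        ← Matrix.mulVec_mulVec, hMv, Matrix.mulVec_smul, smul_smul]
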